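/- arXiv:0907.3092 — 4 statements merged into one kernel-verified Lean document; each statement's English description precedes it below -/
import Mathlib

section
/- Let B be the n×n boomerang matrix with elementary vector b where 0 ≤ b_1 ≤ b_2 ≤ ... ≤ b_n. Define the lower triangular matrix C by C_{hp} = sqrt(b_p - b_{p-1}) for p ≤ h (with b_0 = 0) and C_{hp} = 0 for p > h. Then C C^T = B. -/
/-!
Entry `(h, q)` of `C * Cᵀ` is the sum of the squared column values `b (k + 1) - b k` over
`k ≤ min h q`, which telescopes to `b (min h q + 1) - b 0`.
-/

open Finset Matrix

theorem Finset.sum_range_ite_le {M : Type*} [AddCommMonoid M] (f : ℕ → M) {m n : ℕ}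
    (hmn : m < n) :
    ∑ k ∈ range n, (if k ≤ m then f k else 0) = ∑ k ∈ range (m + 1), f k := by
  rw [← sum_filter]
  congr 1
  ext k
  simp only [mem_filter, mem_range]
  omega

theorem Matrix.mul_transpose_apply_of_lowerTriangular {R : Type*} [CommSemiring R] {n : ℕ}
    (c : ℕ → R) (h q : Fin n) :
    (of (fun i j : Fin n => if (j : ℕ) ≤ i then c j else 0) *
        (of fun i j : Fin n => if (j : ℕ) ≤ i then c j else 0)ᵀ) h q =
      ∑ k ∈ range (min (h : ℕ) q + 1), c k * c k := by
  have hterm : ∀ k : Fin n,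
      ((if (k : ℕ) ≤ h then c k else 0) * if (k : ℕ) ≤ q then c k else 0) =
        if (k : ℕ) ≤ min (h : ℕ) q then c k * c k else 0 := by
    intro k
    by_cases hkh : (k : ℕ) ≤ h <;> by_cases hkq : (k : ℕ) ≤ q <;> simp [hkh, hkq]
  simp only [mul_apply, transpose_apply, of_apply, hterm]
  rw [Fin.sum_univ_eq_sum_range (fun k => if k ≤ min (h : ℕ) q then c k * c k else 0),
    sum_range_ite_le _ (min_lt_of_left_lt h.isLt)]

/-- Explicit Cholesky factorization of a boomerang matrix: with `b 0 = 0` and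
`b` nondecreasing, the lower triangular matrix `C h p = √(b (p+1) - b p)` for
`p ≤ h` (indices `0`-based, so `b (j+1)` is the `j`-th entry of the elementary
vector) satisfies `C * Cᵀ = B` where `B h p = b (min h p + 1)`. -/
theorem boomerang_cholesky (n : ℕ) (b : ℕ → ℝ) (hb0 : b 0 = 0)
    (hmono : Monotone b)
    (C : Matrix (Fin n) (Fin n) ℝ)
    (hC : ∀ h p : Fin n, C h p =
      if (p : ℕ) ≤ (h : ℕ) then Real.sqrt (b ((p : ℕ) + 1) - b (p : ℕ)) else 0) :
    C * C.transpose = Matrix.of fun h p : Fin n => b (min (h : ℕ) (p : ℕ) + 1) := by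
  obtain rfl : C = of fun h p : Fin n =>
      if (p : ℕ) ≤ h then Real.sqrt (b ((p : ℕ) + 1) - b p) else 0 := Matrix.ext hC
  ext h q
  rw [mul_transpose_apply_of_lowerTriangular (fun k => Real.sqrt (b (k + 1) - b k)), of_apply]
  simp only [Real.mul_self_sqrt (sub_nonneg.2 (hmono (Nat.le_succ _)))]
  rw [sum_range_sub, hb0, sub_zero]
end

section
/- Let (B_1,...,B_P) be D×D matrices with all differences B_{h+1} − B_h (and B_1) invertible, and B the block boomerang matrix with (h,p) block B_{min(h,p)}. Define T_l = −(B_{l+1} − B_l)^{-1} for l = 1,...,P−1 and D_m = (B_m − B_{m−1})^{-1}(B_{m+1} − B_{m−1})(B_{m+1} − B_m)^{-1} for m = 1,...,P (with the convention B_0 = 0 and, for m = P, D_P = (B_P − B_{P−1})^{-1}). If the B_h are symmetric and the differences commute appropriately so that B is invertible, then the block tridiagonal matrix with diagonal blocks D_m and off-diagonal blocks T_l is the inverse of B. -/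
/-!
Write `Δₖ = A (k+1) - A k`. Since `A 0 = 0`, the block `A (min h p + 1)` is `∑_{k ≤ min h p} Δₖ`,
so `B = Lᵀ Δ L` with `L` the upper-triangular matrix of ones and `Δ = diag(Δₖ)`.
The inverse of `L` is the bidiagonal difference matrix `V`, hence `B⁻¹ = V Δ⁻¹ Vᵀ`,
which is the symmetric block tridiagonal matrix of the statement; the interior diagonal blocks
match because `a⁻¹ (a + b) b⁻¹ = a⁻¹ + b⁻¹`. The argument works over any ring.
-/

open Matrix Finset

namespace BlockBoomerang

/- These are integer matrices, mapped into the coefficient ring when needed: over `ℤ`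
transposition reverses products and a one-sided inverse is two-sided. -/
def sumMatrix (n : ℕ) : Matrix (Fin n) (Fin n) ℤ :=
  of fun h k => if (h : ℕ) ≤ k then 1 else 0

def diffMatrix (n : ℕ) : Matrix (Fin n) (Fin n) ℤ :=
  of fun h k => (if (k : ℕ) = h then 1 else 0) - if (k : ℕ) = h + 1 then 1 else 0

theorem sumMatrix_mul_diffMatrix (n : ℕ) : sumMatrix n * diffMatrix n = 1 := by
  ext h p
  set g : ℕ → ℤ := fun k => if (p : ℕ) = k then 1 else 0
  have hIco : (range n).filter (fun k => (h : ℕ) ≤ k) = Ico (h : ℕ) n := by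
    ext k; simp only [mem_filter, mem_range, mem_Ico]; omega
  calc (sumMatrix n * diffMatrix n) h p
      = ∑ k ∈ range n, if (h : ℕ) ≤ k then g k - g (k + 1) else 0 := by
        rw [mul_apply, ← Fin.sum_univ_eq_sum_range
          (fun k => if (h : ℕ) ≤ k then g k - g (k + 1) else 0)]
        refine sum_congr rfl fun k _ => ?_
        simp only [sumMatrix, diffMatrix, of_apply, g, ite_mul, one_mul, zero_mul, eq_comm]
    _ = g h - g n := by
        rw [← sum_filter, hIco, ← neg_sub, ← sum_Ico_sub g h.isLt.le, ← sum_neg_distrib]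
        simp only [neg_sub]
    _ = (1 : Matrix (Fin n) (Fin n) ℤ) h p := by
        simp only [g, if_neg p.isLt.ne, sub_zero, one_apply, Fin.ext_iff]
        exact if_congr eq_comm rfl rfl

theorem diffMatrix_mul_sumMatrix (n : ℕ) : diffMatrix n * sumMatrix n = 1 :=
  mul_eq_one_comm.mp (sumMatrix_mul_diffMatrix n)

variable {R : Type*} [Ring R] (n : ℕ)

def boomerang (a : ℕ → R) : Matrix (Fin n) (Fin n) R :=
  of fun h p => a (min (h : ℕ) p + 1)

def tridiagonal (e : ℕ → R) : Matrix (Fin n) (Fin n) R :=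
  of fun h p =>
    if h = p then (if (h : ℕ) + 1 = n then e h else e h + e (h + 1))
    else if (p : ℕ) = h + 1 then -e (h + 1)
    else if (h : ℕ) = p + 1 then -e (p + 1)
    else 0

theorem boomerang_eq_mul_diagonal_mul (a : ℕ → R) (ha0 : a 0 = 0) :
    boomerang n a = (Int.castRingHom R).mapMatrix (sumMatrix n)ᵀ *
      diagonal (fun k : Fin n => a (k + 1) - a k) *
        (Int.castRingHom R).mapMatrix (sumMatrix n) := by
  ext h p
  have hrange :
      (range n).filter (fun k => k ≤ (p : ℕ) ∧ k ≤ (h : ℕ)) = range (min (h : ℕ) p + 1) := by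
    ext k; simp only [mem_filter, mem_range]; omega
  calc boomerang n a h p = a (min (h : ℕ) p + 1) - a 0 := by simp [boomerang, ha0]
    _ = ∑ k ∈ range n, if k ≤ (p : ℕ) ∧ k ≤ (h : ℕ) then a (k + 1) - a k else 0 := by
        rw [← sum_filter, hrange, sum_range_sub]
    _ = _ := by
        rw [mul_apply, ← Fin.sum_univ_eq_sum_range
          (fun k => if k ≤ (p : ℕ) ∧ k ≤ (h : ℕ) then a (k + 1) - a k else 0)]
        refine sum_congr rfl fun k _ => ?_
        simp only [sumMatrix, RingHom.mapMatrix_apply, transpose_apply, map_apply, of_apply,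
          mul_diagonal, eq_intCast, Int.cast_ite, Int.cast_one, Int.cast_zero, one_mul, mul_one,
          ite_mul, mul_ite, zero_mul, mul_zero, ite_and]

theorem tridiagonal_eq (e : ℕ → R) :
    tridiagonal n e = (Int.castRingHom R).mapMatrix (diffMatrix n) *
      diagonal (fun k : Fin n => e k) * (Int.castRingHom R).mapMatrix (diffMatrix n)ᵀ := by
  ext h p
  set X : ℕ → R := fun k => (if k = p then 1 else 0) - if k = p + 1 then 1 else 0
  calc tridiagonal n e h p
      = e h * X h - if (h : ℕ) + 1 < n then e (h + 1) * X (h + 1) else 0 := by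
        simp only [tridiagonal, X, of_apply, Fin.ext_iff]
        split_ifs <;> first | omega | (simp; done) | (simp; congr 1; omega)
    _ = ∑ k ∈ range n,
          ((if k = h then 1 else 0) - (if k = h + 1 then 1 else 0)) * e k * X k := by
        simp only [sub_mul, ite_mul, one_mul, zero_mul, sum_sub_distrib]
        rw [sum_ite_eq', sum_ite_eq', if_pos (mem_range.2 h.isLt)]
        simp only [mem_range]
    _ = _ := by
        rw [mul_apply, ← Fin.sum_univ_eq_sum_range
          (fun k => ((if k = h then 1 else 0) - (if k = h + 1 then 1 else 0)) * e k * X k)]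
        refine sum_congr rfl fun k _ => ?_
        simp [diffMatrix, X, mul_diagonal, RingHom.mapMatrix_apply]

theorem mul_mul_mul_mul_mul_eq_one {M : Type*} [Monoid M] {l d u v e w : M}
    (huv : u * v = 1) (hde : d * e = 1) (hlw : l * w = 1) : l * d * u * (v * e * w) = 1 := by
  rw [show l * d * u * (v * e * w) = l * (d * (u * v) * e) * w by simp only [mul_assoc],
    huv, mul_one, hde, mul_one, hlw]

theorem boomerang_mul_tridiagonal (a : ℕ → R) (ha0 : a 0 = 0)
    (hunit : ∀ k < n, IsUnit (a (k + 1) - a k)) :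
    boomerang n a * tridiagonal n (fun k => Ring.inverse (a (k + 1) - a k)) = 1 ∧
      tridiagonal n (fun k => Ring.inverse (a (k + 1) - a k)) * boomerang n a = 1 := by
  have hcast {M N : Matrix (Fin n) (Fin n) ℤ} (h : M * N = 1) :
      (Int.castRingHom R).mapMatrix M * (Int.castRingHom R).mapMatrix N = 1 := by
    rw [← map_mul, h, map_one]
  have hdiag {d d' : Fin n → R} (h : ∀ k, d k * d' k = 1) : diagonal d * diagonal d' = 1 := by
    rw [diagonal_mul_diagonal, funext h, diagonal_one]
  have hSD := sumMatrix_mul_diffMatrix n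
  have hDS := diffMatrix_mul_sumMatrix n
  rw [boomerang_eq_mul_diagonal_mul n a ha0, tridiagonal_eq]
  exact ⟨mul_mul_mul_mul_mul_eq_one (hcast hSD)
      (hdiag fun k => Ring.mul_inverse_cancel _ (hunit k k.isLt))
      (hcast (by rw [← transpose_mul, hDS, transpose_one])),
    mul_mul_mul_mul_mul_eq_one (hcast (by rw [← transpose_mul, hSD, transpose_one]))
      (hdiag fun k => Ring.inverse_mul_cancel _ (hunit k k.isLt)) (hcast hDS)⟩

end BlockBoomerang

open BlockBoomerang

theorem block_boomerang_inverse_general (P D : ℕ)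
    (A : ℕ → Matrix (Fin D) (Fin D) ℝ)
    (hA0 : A 0 = 0)
    (hAinv : ∀ k, k < P → IsUnit (A (k + 1) - A k))
    (B : Matrix (Fin P × Fin D) (Fin P × Fin D) ℝ)
    (hB : ∀ (h p : Fin P) (i j : Fin D),
      B (h, i) (p, j) = A (min (h : ℕ) (p : ℕ) + 1) i j)
    (Dblk : Fin P → Matrix (Fin D) (Fin D) ℝ)
    (hDblk : ∀ m : Fin P, Dblk m =
      if (m : ℕ) + 1 = P then (A P - A (P - 1))⁻¹
      else (A ((m : ℕ) + 1) - A (m : ℕ))⁻¹ * (A ((m : ℕ) + 2) - A (m : ℕ)) *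
        (A ((m : ℕ) + 2) - A ((m : ℕ) + 1))⁻¹)
    (Tblk : ℕ → Matrix (Fin D) (Fin D) ℝ)
    (hTblk : ∀ k, Tblk k = -(A (k + 2) - A (k + 1))⁻¹)
    (Tinv : Matrix (Fin P × Fin D) (Fin P × Fin D) ℝ)
    (hTinv : ∀ (h p : Fin P) (i j : Fin D),
      Tinv (h, i) (p, j) =
        if h = p then Dblk h i j
        else if (p : ℕ) = (h : ℕ) + 1 then Tblk (h : ℕ) i j
        else if (h : ℕ) = (p : ℕ) + 1 then Tblk (p : ℕ) i j
        else 0) :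
    B * Tinv = 1 ∧ Tinv * B = 1 := by
  set e : ℕ → Matrix (Fin D) (Fin D) ℝ := fun k => Ring.inverse (A (k + 1) - A k)
  have hD (m : Fin P) : Dblk m = if (m : ℕ) + 1 = P then e m else e m + e (m + 1) := by
    rw [hDblk]
    split_ifs with hm
    · rw [nonsing_inv_eq_ringInverse, show P - 1 = m by omega]
      change _ = Ring.inverse (A (m + 1) - A m)
      rw [hm]
    · change _ = Ring.inverse (A (m + 1) - A m) + Ring.inverse (A (m + 2) - A (m + 1))
      rw [nonsing_inv_eq_ringInverse, nonsing_inv_eq_ringInverse, Ring.inverse_add_inverse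
        (iff_of_true (hAinv m m.isLt) (hAinv (m + 1) (by omega)))]
      congr 2
      abel
  have hT (k : ℕ) : Tblk k = -e (k + 1) := by rw [hTblk, nonsing_inv_eq_ringInverse]
  have hBcomp : B = comp _ _ _ _ _ (boomerang P A) := by
    ext ⟨h, i⟩ ⟨p, j⟩
    rw [hB]
    rfl
  have hTcomp : Tinv = comp _ _ _ _ _ (tridiagonal P e) := by
    ext ⟨h, i⟩ ⟨p, j⟩
    rw [hTinv, hD, hT, hT]
    simp only [comp_apply, tridiagonal, of_apply]
    split_ifs <;> rfl
  obtain ⟨hBT, hTB⟩ := boomerang_mul_tridiagonal P A hA0 hAinv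
  rw [hBcomp, hTcomp, ← compRingEquiv_apply, ← compRingEquiv_apply, ← map_mul, ← map_mul, hBT,
    hTB, map_one]
  exact ⟨rfl, rfl⟩

/-- Proposition 2 of the paper: the inverse of a block boomerang matrix is
symmetric block tridiagonal.  Blocks are `A 1, ..., A P` with the convention
`A 0 = 0` (`Fin P` indices are `0`-based); the `(h,p)` block of `B` is
`A (min h p + 1)`.  With all differences `A (k+1) - A k` invertible, symmetric
and pairwise commuting, the block tridiagonal matrix `Tinv` with diagonal
blocks `D_m = (B_m - B_{m-1})⁻¹ (B_{m+1} - B_{m-1}) (B_{m+1} - B_m)⁻¹`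
(for the last block `D_P = (B_P - B_{P-1})⁻¹`) and off-diagonal blocks
`T_l = -(B_{l+1} - B_l)⁻¹` is a two-sided inverse of `B`. -/
theorem block_boomerang_inverse (P D : ℕ)
    (A : ℕ → Matrix (Fin D) (Fin D) ℝ)
    (hA0 : A 0 = 0)
    (hAsymm : ∀ h, h ≤ P → (A h).IsSymm)
    (hAinv : ∀ k, k < P → IsUnit (A (k + 1) - A k))
    (hAcomm : ∀ k l, Commute (A (k + 1) - A k) (A (l + 1) - A l))
    (B : Matrix (Fin P × Fin D) (Fin P × Fin D) ℝ)
    (hB : ∀ (h p : Fin P) (i j : Fin D),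
      B (h, i) (p, j) = A (min (h : ℕ) (p : ℕ) + 1) i j)
    (Dblk : Fin P → Matrix (Fin D) (Fin D) ℝ)
    (hDblk : ∀ m : Fin P, Dblk m =
      if (m : ℕ) + 1 = P then (A P - A (P - 1))⁻¹
      else (A ((m : ℕ) + 1) - A (m : ℕ))⁻¹ * (A ((m : ℕ) + 2) - A (m : ℕ)) *
        (A ((m : ℕ) + 2) - A ((m : ℕ) + 1))⁻¹)
    (Tblk : ℕ → Matrix (Fin D) (Fin D) ℝ)
    (hTblk : ∀ k, Tblk k = -(A (k + 2) - A (k + 1))⁻¹)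
    (Tinv : Matrix (Fin P × Fin D) (Fin P × Fin D) ℝ)
    (hTinv : ∀ (h p : Fin P) (i j : Fin D),
      Tinv (h, i) (p, j) =
        if h = p then Dblk h i j
        else if (p : ℕ) = (h : ℕ) + 1 then Tblk (h : ℕ) i j
        else if (h : ℕ) = (p : ℕ) + 1 then Tblk (p : ℕ) i j
        else 0) :
    B * Tinv = 1 ∧ Tinv * B = 1 :=
  block_boomerang_inverse_general P D A hA0 hAinv B hB Dblk hDblk Tblk hTblk Tinv hTinv
end

section
/- Let A and B be n×n boomerang matrices with elementary vectors a and b respectively. Then Tr(A^T B) = Tr(A B) = Σ_{j=1}^{n} (2(n−j)+1) a_j b_j. -/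
/-!
Since `min` is symmetric, a boomerang matrix is symmetric, so `Tr(Aᵀ B) = Tr(A B)` and
`Tr(A B) = Σ_{h,p} a_{min(h,p)} b_{min(h,p)}`. Grouping the pairs `(h, p)` by `j = min(h, p)`,
the fibre of `j` is the square `[j, n)²` minus the square `(j, n)²`, which has
`(n - j)² - (n - 1 - j)² = 2(n - 1 - j) + 1` elements (`0`-based `j`).
-/

open Finset

namespace Matrix

variable {ι α : Type*} [LinearOrder ι]

def boomerang (a : ι → α) : Matrix ι ι α :=
  of fun h p => a (min h p)

@[simp]
theorem boomerang_apply (a : ι → α) (h p : ι) : boomerang a h p = a (min h p) :=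
  rfl

theorem boomerang_transpose (a : ι → α) : (boomerang a)ᵀ = boomerang a := by
  ext h p
  simp [min_comm]

theorem trace_boomerang_mul_boomerang [Fintype ι] [AddCommMonoid α] [Mul α] (a b : ι → α) :
    trace (boomerang a * boomerang b) = ∑ q : ι × ι, a (min q.1 q.2) * b (min q.1 q.2) := by
  simp only [trace, diag_apply, mul_apply, boomerang_apply, Fintype.sum_prod_type, min_comm]

end Matrix

theorem filter_min_eq_eq_sdiff {ι : Type*} [LinearOrder ι] [Fintype ι] [LocallyFiniteOrderTop ι]
    [DecidableEq ι] (j : ι) :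
    ({q : ι × ι | min q.1 q.2 = j} : Finset (ι × ι)) = (Ici j ×ˢ Ici j) \ (Ioi j ×ˢ Ioi j) := by
  ext q
  simp only [mem_filter, mem_univ, true_and, mem_sdiff, mem_product, mem_Ici, mem_Ioi]
  constructor
  · rintro rfl
    exact ⟨⟨min_le_left _ _, min_le_right _ _⟩, fun h => lt_irrefl _ (lt_min h.1 h.2)⟩
  · rintro ⟨⟨h₁, h₂⟩, hlt⟩
    refine le_antisymm ?_ (le_min h₁ h₂)
    by_contra! h
    exact hlt ⟨h.trans_le (min_le_left _ _), h.trans_le (min_le_right _ _)⟩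

theorem Fin.card_filter_min_eq {n : ℕ} (j : Fin n) :
    #{q : Fin n × Fin n | min q.1 q.2 = j} = 2 * (n - 1 - j) + 1 := by
  have hsub : Ioi j ×ˢ Ioi j ⊆ Ici j ×ˢ Ici j :=
    product_subset_product Ioi_subset_Ici_self Ioi_subset_Ici_self
  rw [filter_min_eq_eq_sdiff, card_sdiff_of_subset hsub, card_product, card_product,
    Fin.card_Ici, Fin.card_Ioi]
  obtain ⟨k, hk⟩ : ∃ k, n - j = k + 1 := ⟨n - 1 - j, by omega⟩
  rw [hk, show n - 1 - j = k by omega, show (k + 1) * (k + 1) = k * k + (2 * k + 1) by ring,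
    Nat.add_sub_cancel_left]

theorem Fin.sum_prod_min {M : Type*} [AddCommMonoid M] {n : ℕ} (f : Fin n → M) :
    ∑ q : Fin n × Fin n, f (min q.1 q.2) = ∑ j : Fin n, (2 * (n - 1 - j) + 1) • f j := by
  have himage : (univ : Finset (Fin n × Fin n)).image (fun q => min q.1 q.2) = univ :=
    eq_univ_of_forall fun j => mem_image.mpr ⟨(j, j), mem_univ _, min_self j⟩
  rw [sum_comp, himage]
  exact sum_congr rfl fun j _ => by rw [Fin.card_filter_min_eq]

/-- `0`-based indices: the paper's `a_j` is `a ⟨j - 1⟩`, so its weight `2(n - j) + 1` reads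
`2(n - 1 - j) + 1` here. -/
theorem boomerang_trace_formula (n : ℕ) (a b : Fin n → ℝ)
    (A B : Matrix (Fin n) (Fin n) ℝ)
    (hA : ∀ h p : Fin n, A h p = a (min h p))
    (hB : ∀ h p : Fin n, B h p = b (min h p)) :
    Matrix.trace (A.transpose * B) = Matrix.trace (A * B) ∧
    Matrix.trace (A * B) =
      ∑ j : Fin n, ((2 * (n - 1 - (j : ℕ)) + 1 : ℕ) : ℝ) * a j * b j := by
  obtain rfl : A = Matrix.boomerang a := Matrix.ext hA
  obtain rfl : B = Matrix.boomerang b := Matrix.ext hB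
  refine ⟨by rw [Matrix.boomerang_transpose], ?_⟩
  rw [Matrix.trace_boomerang_mul_boomerang, Fin.sum_prod_min (fun j => a j * b j)]
  simp only [nsmul_eq_mul, mul_assoc]
end

section
/- Let G ∈ ℝ^{m×n} with m = m_1 m_2, n = n_1 n_2, and fix G_1 ∈ ℝ^{m_1×n_1} with G_1 ≠ 0. For h ∈ {1,...,m_2}, l ∈ {1,...,n_2}, let R(G)_{hl} be the m_1×n_1 matrix with entries (R(G)_{hl})_{ij} = G_{h+(i−1)m_2, l+(j−1)n_2}. Then the matrix G_2* ∈ ℝ^{m_2×n_2} defined by (G_2*)_{hl} = Tr(R(G)_{hl}^T G_1)/Tr(G_1 G_1^T) minimizes G_2 ↦ ‖G − G_1 ⊗ G_2‖_F^2 over all G_2 ∈ ℝ^{m_2×n_2}. -/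
/-!
The squared Frobenius distance `‖G - G₁ ⊗ G₂‖²` splits into one sum per entry `(h, l)` of `G₂`,
the block `∑ᵢⱼ (G (i,h) (j,l) - G₁ i j * G₂ h l)²`, which depends on `G₂ h l` alone. Each block is
a one-variable least-squares problem `min_c ‖r - c a‖²`, solved by `c = ⟪r, a⟫ / ‖a‖²`.
-/

open Kronecker

theorem sum_sq_sub_mul_div_le {ι : Type*} [Fintype ι] (g a : ι → ℝ) (c : ℝ) :
    ∑ i, (g i - a i * ((∑ i, g i * a i) / ∑ i, a i ^ 2)) ^ 2 ≤ ∑ i, (g i - a i * c) ^ 2 := by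
  have expand (d : ℝ) : ∑ i, (g i - a i * d) ^ 2 =
      ∑ i, g i ^ 2 - 2 * d * ∑ i, g i * a i + d ^ 2 * ∑ i, a i ^ 2 := by
    simp only [Finset.mul_sum, ← Finset.sum_sub_distrib, ← Finset.sum_add_distrib]
    exact Finset.sum_congr rfl fun i _ => by ring
  have cauchy_schwarz := Finset.sum_mul_sq_le_sq_mul_sq Finset.univ g a
  have hA : 0 ≤ ∑ i, a i ^ 2 := Finset.sum_nonneg fun i _ => sq_nonneg (a i)
  rw [expand, expand]
  generalize ∑ i, g i * a i = B at *
  generalize ∑ i, a i ^ 2 = A at *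
  rcases hA.eq_or_lt with rfl | hA
  · -- `a = 0`: the quotient is the junk value `B / 0 = 0`, and Cauchy–Schwarz gives `B = 0`.
    obtain rfl : B = 0 := by nlinarith
    simp
  · obtain ⟨d, rfl⟩ : ∃ d, B = d * A := ⟨B / A, (div_mul_cancel₀ B hA.ne').symm⟩
    rw [mul_div_cancel_right₀ d hA.ne']
    nlinarith [mul_nonneg hA.le (sq_nonneg (c - d))]

theorem Matrix.sum_sq_sub_kronecker {α β γ δ : Type*} [Fintype α] [Fintype β] [Fintype γ]
    [Fintype δ] (G : Matrix (α × β) (γ × δ) ℝ) (A : Matrix α γ ℝ) (B : Matrix β δ ℝ) :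
    ∑ p, ∑ q, (G p q - (A ⊗ₖ B) p q) ^ 2 =
      ∑ h, ∑ l, ∑ ij : α × γ, (G (ij.1, h) (ij.2, l) - A ij.1 ij.2 * B h l) ^ 2 := by
  simp only [Fintype.sum_prod_type, kroneckerMap_apply]
  rw [Finset.sum_comm]
  refine Finset.sum_congr rfl fun h _ => ?_
  simp_rw [Finset.sum_comm (γ := δ)]

theorem nearest_kronecker_product_general (m₁ m₂ n₁ n₂ : ℕ)
    (G : Matrix (Fin m₁ × Fin m₂) (Fin n₁ × Fin n₂) ℝ)
    (G₁ : Matrix (Fin m₁) (Fin n₁) ℝ)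
    (G₂star : Matrix (Fin m₂) (Fin n₂) ℝ)
    (hG₂star : ∀ (h : Fin m₂) (l : Fin n₂), G₂star h l =
      (∑ i : Fin m₁, ∑ j : Fin n₁, G (i, h) (j, l) * G₁ i j) /
        (∑ i : Fin m₁, ∑ j : Fin n₁, (G₁ i j) ^ 2)) :
    ∀ G₂ : Matrix (Fin m₂) (Fin n₂) ℝ,
      (∑ p, ∑ q, (G p q - (G₁ ⊗ₖ G₂star) p q) ^ 2) ≤
        ∑ p, ∑ q, (G p q - (G₁ ⊗ₖ G₂) p q) ^ 2 := by
  intro G₂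
  rw [Matrix.sum_sq_sub_kronecker, Matrix.sum_sq_sub_kronecker]
  refine Finset.sum_le_sum fun h _ => Finset.sum_le_sum fun l _ => ?_
  rw [hG₂star, ← Fintype.sum_prod_type', ← Fintype.sum_prod_type']
  exact sum_sq_sub_mul_div_le (fun ij : Fin m₁ × Fin n₁ => G (ij.1, h) (ij.2, l))
    (fun ij => G₁ ij.1 ij.2) (G₂ h l)

/-- Pitsianis–Van Loan nearest Kronecker product (Proposition 4 of the paper):
with `G` indexed by `(Fin m₁ × Fin m₂) × (Fin n₁ × Fin n₂)` so that
`(G₁ ⊗ G₂) (i,h) (j,l) = G₁ i j * G₂ h l`, the matrix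
`G₂* h l = Tr(R(G)_{hl}ᵀ G₁) / Tr(G₁ G₁ᵀ)` (where `R(G)_{hl} i j = G (i,h) (j,l)`)
minimizes the squared Frobenius norm `‖G - G₁ ⊗ G₂‖_F²` over `G₂`. -/
theorem nearest_kronecker_product (m₁ m₂ n₁ n₂ : ℕ)
    (G : Matrix (Fin m₁ × Fin m₂) (Fin n₁ × Fin n₂) ℝ)
    (G₁ : Matrix (Fin m₁) (Fin n₁) ℝ) (hG₁ : G₁ ≠ 0)
    (G₂star : Matrix (Fin m₂) (Fin n₂) ℝ)
    (hG₂star : ∀ (h : Fin m₂) (l : Fin n₂), G₂star h l =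
      (∑ i : Fin m₁, ∑ j : Fin n₁, G (i, h) (j, l) * G₁ i j) /
        (∑ i : Fin m₁, ∑ j : Fin n₁, (G₁ i j) ^ 2)) :
    ∀ G₂ : Matrix (Fin m₂) (Fin n₂) ℝ,
      (∑ p, ∑ q, (G p q - (G₁ ⊗ₖ G₂star) p q) ^ 2) ≤
        ∑ p, ∑ q, (G p q - (G₁ ⊗ₖ G₂) p q) ^ 2 :=
  nearest_kronecker_product_general m₁ m₂ n₁ n₂ G G₁ G₂star hG₂star
end
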